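/- arXiv:1803.03021 — 2 statements merged into one kernel-verified Lean document; each statement's English description precedes it below -/
import Mathlib

section
/- Conversely, if (p_1*, p_2*, w_1*, w_2*) is an interior equilibrium (all coordinates in (0,1)) of the symmetric-game SA-IGA dynamics with u ≠ 0 and b ≠ c, then p_1* = p_2*, w_1* = w_2*, and p_1* = ((b-c)/(2u)) w_1* + (d-b)/u. -/
/-- Converse: any interior equilibrium of the symmetric-game SA-IGA dynamics with
    u ≠ 0, b ≠ c satisfies p₁ = p₂, w₁ = w₂ and p₁ = ((b-c)/(2u)) w₁ + (d-b)/u. -/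
theorem stmt_3 (a b c d ε p1 p2 w1 w2 : ℝ)
    (hu : a + d - b - c ≠ 0) (hbc : b ≠ c) (hε : ε > 0)
    (hp1 : p1 ∈ Set.Ioo (0:ℝ) 1) (hp2 : p2 ∈ Set.Ioo (0:ℝ) 1)
    (hw1 : w1 ∈ Set.Ioo (0:ℝ) 1) (hw2 : w2 ∈ Set.Ioo (0:ℝ) 1)
    (heqp1 : (a + d - b - c) * p2 + (c - b) / 2 * w1 + (b - d) = 0)
    (heqp2 : (a + d - b - c) * p1 + (c - b) / 2 * w2 + (b - d) = 0)
    (heqw1 : ε * (b - c) * (p1 - p2) = 0)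
    (heqw2 : ε * (b - c) * (p2 - p1) = 0) :
    p1 = p2 ∧ w1 = w2 ∧
      p1 = (b - c) / (2 * (a + d - b - c)) * w1 + (d - b) / (a + d - b - c) := by
  have hbc' : b - c ≠ 0 := sub_ne_zero.mpr hbc
  have hpp : p1 = p2 := by
    have := mul_eq_zero.mp heqw1
    rcases this with h | h
    · rcases mul_eq_zero.mp h with h | h
      · exact absurd h (ne_of_gt hε)
      · exact absurd h hbc'
    · linarith [sub_eq_zero.mp h]
  refine ⟨hpp, ?_, ?_⟩
  · subst hpp
    have : (c - b) / 2 * w1 = (c - b) / 2 * w2 := by linarith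
    have h2 : (c - b) / 2 ≠ 0 := by
      intro h; apply hbc'; field_simp at h; linarith
    exact mul_left_cancel₀ h2 this
  · subst hpp
    have key : p1 = ((b-c)/2*w1 + (d-b)) / (a+d-b-c) := by
      rw [eq_div_iff hu]; linarith
    rw [key]; field_simp
end

section
/- If u > 0 (or u < 0 together with (b-c) ≠ 0), the matrix A = [[0, u, c-b, 0],[u, 0, 0, c-b],[ε(b-c), ε(c-b), 0, 0],[ε(c-b), ε(b-c), 0, 0]] with ε > 0 has an eigenvalue with strictly positive real part; hence any interior equilibrium of the symmetric-game SA-IGA dynamics is not Lyapunov stable (for the linearized system). -/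
/-!
The characteristic polynomial of the Jacobian factors as
`λ (λ - u) (λ² + u λ + 2ε(c - b)²)`. For `u > 0` the eigenvalue `u` is positive. For `u < 0`
the two roots of the quadratic factor sum to `-u > 0`, so one of them has positive real part.
-/

open Matrix Polynomial

def saigaJacobian (u b c ε : ℝ) : Matrix (Fin 4) (Fin 4) ℝ :=
  !![0, u, c - b, 0;
     u, 0, 0, c - b;
     ε * (b - c), ε * (c - b), 0, 0;
     ε * (c - b), ε * (b - c), 0, 0]

lemma eval_charpoly_map_saigaJacobian (u b c ε : ℝ) (z : ℂ) :
    ((saigaJacobian u b c ε).map Complex.ofReal).charpoly.eval z =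
      z * (z - u) * (z ^ 2 + u * z + 2 * ε * (c - b) ^ 2) := by
  rw [eval_charpoly]
  simp [saigaJacobian, Fin.sum_univ_succ, det_succ_row_zero, Fin.succAbove]
  ring

lemma Complex.exists_re_pos_root_quadratic_of_re_neg {p q : ℂ} (hp : p.re < 0) :
    ∃ z : ℂ, 0 < z.re ∧ z ^ 2 + p * z + q = 0 := by
  obtain ⟨s, hs⟩ := IsAlgClosed.exists_eq_mul_self (p ^ 2 - 4 * q)
  have hroot : ∀ t : ℂ, t * t = p ^ 2 - 4 * q → ((t - p) / 2) ^ 2 + p * ((t - p) / 2) + q = 0 :=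
    fun t ht => by linear_combination ht / 4
  have hsum : ((s - p) / 2).re + ((-s - p) / 2).re = -p.re := by
    simp only [Complex.div_ofNat_re, Complex.sub_re, Complex.neg_re]
    ring
  rcases lt_or_ge 0 ((s - p) / 2).re with hpos | hnonpos
  · exact ⟨_, hpos, hroot s hs.symm⟩
  · exact ⟨_, by linarith, hroot (-s) (by rw [neg_mul_neg, hs])⟩

theorem stmt_6_general (u b c ε : ℝ)
    (h : 0 < u ∨ (u < 0 ∧ b ≠ c)) :
    ∃ lam : ℂ, 0 < lam.re ∧
      (((!![0, u, c - b, 0;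
            u, 0, 0, c - b;
            ε * (b - c), ε * (c - b), 0, 0;
            ε * (c - b), ε * (b - c), 0, 0] : Matrix (Fin 4) (Fin 4) ℝ).map
          (Complex.ofReal)).charpoly).IsRoot lam := by
  obtain ⟨z, hz, hroot⟩ : ∃ z : ℂ, 0 < z.re ∧
      (z = u ∨ z ^ 2 + u * z + 2 * ε * ((c : ℂ) - b) ^ 2 = 0) := by
    rcases h with hu | ⟨hu, -⟩
    · exact ⟨u, by simpa using hu, .inl rfl⟩
    · obtain ⟨z, hz, hq⟩ := Complex.exists_re_pos_root_quadratic_of_re_neg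
        (p := u) (q := 2 * ε * ((c : ℂ) - b) ^ 2) (by simpa using hu)
      exact ⟨z, hz, .inr hq⟩
  refine ⟨z, hz, ?_⟩
  change ((saigaJacobian u b c ε).map Complex.ofReal).charpoly.IsRoot z
  rw [IsRoot.def, eval_charpoly_map_saigaJacobian]
  rcases hroot with rfl | hq
  · simp
  · simp [hq]

/-- If u > 0, or u < 0 together with b ≠ c, the SA-IGA Jacobian has an eigenvalue
    (over ℂ) with strictly positive real part. -/
theorem stmt_6 (u b c ε : ℝ) (hε : ε > 0)
    (h : 0 < u ∨ (u < 0 ∧ b ≠ c)) :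
    ∃ lam : ℂ, 0 < lam.re ∧
      (((!![0, u, c - b, 0;
            u, 0, 0, c - b;
            ε * (b - c), ε * (c - b), 0, 0;
            ε * (c - b), ε * (b - c), 0, 0] : Matrix (Fin 4) (Fin 4) ℝ).map
          (Complex.ofReal)).charpoly).IsRoot lam :=
  stmt_6_general u b c ε h
end
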